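/- The entailment p ∧ ¬p ∧ q ⊨_{BD△} p ∧ ¬p holds, but for every BD△ model and every world w we have w ⊭⁺ t(p ∧ ¬p), where t(ψ) := △ψ ∧ ¬△¬ψ; equivalently, t(p ∧ ¬p) entails ⊥. -/

import Mathlib

inductive BDForm : Type
  | var : ℕ → BDForm
  | neg : BDForm → BDForm
  | and : BDForm → BDForm → BDForm
  | or : BDForm → BDForm → BDForm
  | delta : BDForm → BDForm
deriving DecidableEq

structure BDModel where
  W : Type
  vp : ℕ → W → Prop
  vm : ℕ → W → Prop

def BDModel.sat (M : BDModel) : Bool → BDForm → M.W → Prop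
  | true, .var p, w => M.vp p w
  | false, .var p, w => M.vm p w
  | b, .neg φ, w => M.sat (!b) φ w
  | true, .and φ ψ, w => M.sat true φ w ∧ M.sat true ψ w
  | false, .and φ ψ, w => M.sat false φ w ∨ M.sat false ψ w
  | true, .or φ ψ, w => M.sat true φ w ∨ M.sat true ψ w
  | false, .or φ ψ, w => M.sat false φ w ∧ M.sat false ψ w
  | true, .delta φ, w => M.sat true φ w
  | false, .delta φ, w => ¬ M.sat true φ w

/-- BD△ entailment: positive extension inclusion and reverse negative inclusion, in every model. -/
def Entails (φ χ : BDForm) : Prop :=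
  ∀ (M : BDModel) (w : M.W),
    (M.sat true φ w → M.sat true χ w) ∧ (M.sat false χ w → M.sat false φ w)

/-- the value-detecting formulas -/
def tF (φ : BDForm) : BDForm := (φ.delta).and ((φ.neg.delta).neg)
def bF (φ : BDForm) : BDForm := (φ.delta).and (φ.neg.delta)
def nF (φ : BDForm) : BDForm := ((φ.delta).neg).and ((φ.neg.delta).neg)
def fF (φ : BDForm) : BDForm := ((φ.delta).neg).and (φ.neg.delta)

def topF : BDForm := ((BDForm.var 0).delta).or (((BDForm.var 0).delta).neg)
def botF : BDForm := topF.neg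

/-! t(φ ∧ ¬φ) asks for φ ∧ ¬φ to be true and not false; but φ ∧ ¬φ is true only when φ is
true, and then its second conjunct ¬φ is false, so φ ∧ ¬φ is false as well. Dually, t(φ ∧ ¬φ) is
false at every world, so it has the extensions of ⊥. -/

namespace BDModel

variable (M : BDModel) (w : M.W) (φ : BDForm)

theorem sat_true_tF : M.sat true (tF φ) w ↔ M.sat true φ w ∧ ¬ M.sat false φ w := by
  simp only [tF, sat, Bool.not_true]

theorem sat_false_tF : M.sat false (tF φ) w ↔ ¬ M.sat true φ w ∨ M.sat false φ w := by
  simp only [tF, sat, Bool.not_false, Bool.not_true]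

theorem sat_true_and_neg_self :
    M.sat true (φ.and φ.neg) w ↔ M.sat true φ w ∧ M.sat false φ w := by
  simp only [sat, Bool.not_true]

theorem sat_false_and_neg_self :
    M.sat false (φ.and φ.neg) w ↔ M.sat false φ w ∨ M.sat true φ w := by
  simp only [sat, Bool.not_false]

theorem sat_true_topF : M.sat true topF w := by
  simp only [topF, sat, Bool.not_true]
  exact em _

theorem not_sat_false_topF : ¬ M.sat false topF w := by
  simp only [topF, sat, Bool.not_false]
  exact fun ⟨hn, hp⟩ => hn hp

theorem not_sat_true_tF_and_neg_self : ¬ M.sat true (tF (φ.and φ.neg)) w := by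
  rw [sat_true_tF, sat_true_and_neg_self, sat_false_and_neg_self]
  exact fun ⟨⟨hφ, _⟩, hneg⟩ => hneg (Or.inr hφ)

theorem sat_false_tF_and_neg_self : M.sat false (tF (φ.and φ.neg)) w := by
  rw [sat_false_tF, sat_true_and_neg_self, sat_false_and_neg_self]
  tauto

end BDModel

theorem entails_botF_iff {φ : BDForm} :
    Entails φ botF ↔ ∀ (M : BDModel) (w : M.W), ¬ M.sat true φ w ∧ M.sat false φ w := by
  have hbot : ∀ (M : BDModel) (w : M.W), ¬ M.sat true botF w ∧ M.sat false botF w :=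
    fun M w => ⟨M.not_sat_false_topF w, M.sat_true_topF w⟩
  exact forall₂_congr fun M w => ⟨fun h => ⟨fun hφ => (hbot M w).1 (h.1 hφ), h.2 (hbot M w).2⟩,
    fun h => ⟨fun hφ => absurd hφ h.1, fun _ => h.2⟩⟩

theorem entails_and_of_and_and (φ ψ χ : BDForm) : Entails (φ.and (ψ.and χ)) (φ.and ψ) :=
  fun _ _ => ⟨fun ⟨hφ, hψ, _⟩ => ⟨hφ, hψ⟩, fun h => h.imp_right Or.inl⟩

/-- p ∧ ¬p ∧ q ⊨ p ∧ ¬p, yet t(p ∧ ¬p) is positively satisfied nowhere;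
equivalently t(p ∧ ¬p) entails ⊥. -/
theorem stmt6 :
    Entails ((BDForm.var 0).and (((BDForm.var 0).neg).and (BDForm.var 1)))
      ((BDForm.var 0).and ((BDForm.var 0).neg)) ∧
    (∀ (M : BDModel) (w : M.W),
      ¬ M.sat true (tF ((BDForm.var 0).and ((BDForm.var 0).neg))) w) ∧
    Entails (tF ((BDForm.var 0).and ((BDForm.var 0).neg))) botF :=
  ⟨entails_and_of_and_and _ _ _,
    fun M w => M.not_sat_true_tF_and_neg_self w _,
    entails_botF_iff.2 fun M w =>
      ⟨M.not_sat_true_tF_and_neg_self w _, M.sat_false_tF_and_neg_self w _⟩⟩
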